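/- arXiv:0803.2257 — 2 statements merged into one kernel-verified Lean document; each statement's English description precedes it below -/
import Mathlib

section
/- The Gabor dictionary Φ_A generated by the Alltop sequence, consisting of the N² atoms M^j T^k f for j,k ∈ ℤ/N with f_n = (1/√N) e^{2πi n³/N} and N ≥ 5 prime, has coherence exactly 1/√N: distinct atoms within the same time-shift block are orthogonal, and atoms from distinct blocks have inner product of modulus 1/√N. -/
open Complex Matrix

/-!
Write `ψ` for the standard additive character of `ZMod N`. Up to the factor `1/√N`, the atom
`M^j T^k f` is `x ↦ ψ (j x + (x - k)³)`, so the inner product of two atoms is `1/N` times the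
character sum of the difference of their phases. Within a block (`k = k'`) that difference is
the linear form `(j' - j) x` and the sum vanishes. Across blocks the cubic terms cancel, leaving
a quadratic with leading coefficient `a = 3 (k - k')`. Squaring out such a sum and substituting
`x = y + h` leaves only the diagonal `h = 0`, since `2a` is a unit once `N > 3`; so its modulus
is exactly `√N`.
-/

open Finset in
theorem AddChar.norm_sq_sum_quadratic {R : Type*} [CommRing R] [Fintype R] [DecidableEq R]
    {ψ : AddChar R ℂ} (hψ : ψ.IsPrimitive) {a : R} (ha : IsUnit (2 * a)) (b c : R) :
    ‖∑ x, ψ (a * x ^ 2 + b * x + c)‖ ^ 2 = Fintype.card R := by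
  set q : R → R := fun x => a * x ^ 2 + b * x + c
  have hdiff : ∀ y h, q (y + h) - q y = y * (2 * a * h) + (a * h ^ 2 + b * h) := fun y h => by
    simp only [q]; ring
  suffices (‖∑ x, ψ (q x)‖ ^ 2 : ℂ) = Fintype.card R by exact_mod_cast this
  calc (‖∑ x, ψ (q x)‖ ^ 2 : ℂ)
      = ∑ y, ∑ h, ψ (y * (2 * a * h)) * ψ (a * h ^ 2 + b * h) := by
        rw [← mul_conj', map_sum, mul_comm, sum_mul_sum]
        refine sum_congr rfl fun y _ => (Fintype.sum_equiv (Equiv.addLeft y) _ _ fun h => ?_).symm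
        rw [← map_neg_eq_conj, ← AddChar.map_add_eq_mul, ← AddChar.map_add_eq_mul,
          Equiv.coe_addLeft, neg_add_eq_sub, hdiff]
    _ = ∑ h, (if 2 * a * h = 0 then (Fintype.card R : ℂ) else 0) * ψ (a * h ^ 2 + b * h) := by
        rw [sum_comm]
        simp only [← sum_mul, AddChar.sum_mulShift _ hψ, Nat.cast_ite, Nat.cast_zero]
    _ = Fintype.card R := by
        rw [sum_eq_single 0
          (fun h _ hh => by rw [if_neg (ha.mul_right_eq_zero.not.mpr hh), zero_mul]) (by simp)]
        simp

open Fin.NatCast in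
theorem cyclicShift_pow_mulVec {R : Type*} [Semiring R] {n : ℕ} [NeZero n] (k : ℕ)
    (v : Fin n → R) (i : Fin n) :
    (of (fun i j => if i = j + 1 then 1 else 0 : Fin n → Fin n → R) ^ k *ᵥ v) i
      = v (i - k) := by
  induction k generalizing v with
  | zero => simp
  | succ k ih =>
    rw [pow_succ, ← mulVec_mulVec, ih, Nat.cast_succ, sub_add_eq_sub_sub]
    simp [mulVec, dotProduct, ← sub_eq_iff_eq_add]

theorem inner_eq_sum_addChar_sub {ι G : Type*} [Fintype ι] [AddCommGroup G] [Fintype G]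
    (ψ : AddChar G ℂ) (e : ι ≃ G) (c : ℝ) {g g' : G → G} {u v : EuclideanSpace ℂ ι}
    (hu : ∀ i, u i = c * ψ (g (e i))) (hv : ∀ i, v i = c * ψ (g' (e i))) :
    inner ℂ u v = c ^ 2 * ∑ x, ψ (g' x - g x) := by
  rw [← e.sum_comp]
  simp only [PiLp.inner_apply, RCLike.inner_apply, hu, hv, Finset.mul_sum, map_mul,
    conj_ofReal, ← AddChar.map_neg_eq_conj, sub_eq_add_neg, AddChar.map_add_eq_mul]
  exact Finset.sum_congr rfl fun i _ => by ring

namespace ZMod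

theorem ofNat_ne_zero_of_lt {N m : ℕ} [m.AtLeastTwo] (hm : m < N) :
    (OfNat.ofNat m : ZMod N) ≠ 0 := by
  rw [← Nat.cast_ofNat, Ne, natCast_eq_zero_iff]
  exact Nat.not_dvd_of_pos_of_lt (Nat.pos_of_neZero m) hm

variable {N : ℕ} [NeZero N]

theorem stdAddChar_natCast (m : ℕ) :
    stdAddChar (m : ZMod N) = exp (2 * Real.pi * I * m / N) := by
  simpa using stdAddChar_coe (N := N) m

theorem finEquiv_apply (i : Fin N) : finEquiv N i = (i : ℕ) := by
  obtain ⟨n, rfl⟩ := Nat.exists_eq_succ_of_ne_zero (NeZero.ne N)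
  exact (Fin.cast_val_eq_self i).symm

end ZMod

section Alltop

variable {N : ℕ} [NeZero N]

/-- `M ^ j * T ^ k * f` at `x` is `ψ (alltopPhase j k x) / √N`. -/
def alltopPhase (j k x : ZMod N) : ZMod N := j * x + (x - k) ^ 3

theorem sum_stdAddChar_alltopPhase_sub_eq_zero {j j' : ZMod N} (hj : j ≠ j') (k : ZMod N) :
    ∑ x, ZMod.stdAddChar (alltopPhase j' k x - alltopPhase j k x) = 0 := by
  have hphase : ∀ x, alltopPhase j' k x - alltopPhase j k x = x * (j' - j) :=
    fun x => by simp only [alltopPhase]; ring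
  simp only [hphase, AddChar.sum_mulShift _ (ZMod.isPrimitive_stdAddChar N), sub_eq_zero,
    hj.symm, if_false, Nat.cast_zero]

theorem norm_sum_stdAddChar_alltopPhase_sub [Fact N.Prime] (hN : 3 < N) (j j' : ZMod N)
    {k k' : ZMod N} (hk : k ≠ k') :
    ‖∑ x, ZMod.stdAddChar (alltopPhase j' k' x - alltopPhase j k x)‖ = Real.sqrt N := by
  have hphase : ∀ x, alltopPhase j' k' x - alltopPhase j k x =
      3 * (k - k') * x ^ 2 + (j' - j + 3 * k' ^ 2 - 3 * k ^ 2) * x + (k ^ 3 - k' ^ 3) :=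
    fun x => by simp only [alltopPhase]; ring
  have hunit : IsUnit (2 * (3 * (k - k'))) :=
    (mul_ne_zero (ZMod.ofNat_ne_zero_of_lt (show 2 < N by omega))
      (mul_ne_zero (ZMod.ofNat_ne_zero_of_lt hN) (sub_ne_zero.mpr hk))).isUnit
  simp only [hphase]
  rw [← Real.sqrt_sq (norm_nonneg _),
    AddChar.norm_sq_sum_quadratic (ZMod.isPrimitive_stdAddChar N) hunit, ZMod.card]

end Alltop

/-- The Alltop Gabor dictionary has coherence exactly `1/√N`: distinct atoms in the same
time-shift block are orthogonal, and atoms from different blocks have inner product of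
modulus `1/√N`. -/
theorem alltop_gabor_coherence (N : ℕ) [NeZero N] (hp : N.Prime) (hN : 5 ≤ N)
    (T : Matrix (Fin N) (Fin N) ℂ)
    (hT : T = fun i j => if i = j + 1 then 1 else 0)
    (M : Matrix (Fin N) (Fin N) ℂ)
    (hM : M = Matrix.diagonal fun m : Fin N =>
      Complex.exp (2 * Real.pi * Complex.I * (m : ℕ) / N))
    (f : EuclideanSpace ℂ (Fin N))
    (hf : f = fun n : Fin N => (1 / Real.sqrt N : ℝ) *
      Complex.exp (2 * Real.pi * Complex.I * ((n : ℕ) ^ 3) / N))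
    (φ : Fin N × Fin N → EuclideanSpace ℂ (Fin N))
    (hφ : φ = fun p => show EuclideanSpace ℂ (Fin N) from
      WithLp.toLp 2 ((M ^ (p.1 : ℕ) * T ^ (p.2 : ℕ)).mulVec f)) :
    (∀ j j' k : Fin N, j ≠ j' → (inner ℂ (φ (j, k)) (φ (j', k)) : ℂ) = 0) ∧
      (∀ j j' k k' : Fin N, k ≠ k' →
        ‖(inner ℂ (φ (j, k)) (φ (j', k')) : ℂ)‖ = 1 / Real.sqrt N) := by
  have : Fact N.Prime := ⟨hp⟩
  set ι := ZMod.finEquiv N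
  have hatom : ∀ j k i, φ (j, k) i
      = (1 / Real.sqrt N : ℝ) * ZMod.stdAddChar (alltopPhase (ι j) (ι k) (ι i)) := by
    intro j k i
    obtain rfl : T = of fun i j => if i = j + 1 then 1 else 0 := hT
    subst hφ hM
    rw [alltopPhase, ← map_sub, ZMod.finEquiv_apply, ZMod.finEquiv_apply, ZMod.finEquiv_apply,
      AddChar.map_add_eq_mul, ← nsmul_eq_mul, AddChar.map_nsmul_eq_pow, ← Nat.cast_pow,
      ZMod.stdAddChar_natCast, ZMod.stdAddChar_natCast]
    simp only [diagonal_pow, hf, one_div, ofReal_inv, ← mulVec_mulVec, mulVec_diagonal,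
      Pi.pow_apply, cyclicShift_pow_mulVec, Fin.cast_val_eq_self, Nat.cast_pow]
    ring
  have hinner : ∀ j k j' k', inner ℂ (φ (j, k)) (φ (j', k')) = (1 / Real.sqrt N : ℝ) ^ 2 *
      ∑ x, ZMod.stdAddChar (alltopPhase (ι j') (ι k') x - alltopPhase (ι j) (ι k) x) :=
    fun j k j' k' => inner_eq_sum_addChar_sub _ ι.toEquiv _ (hatom j k) (hatom j' k')
  refine ⟨fun j j' k hj => ?_, fun j j' k k' hk => ?_⟩
  · rw [hinner, sum_stdAddChar_alltopPhase_sub_eq_zero (ι.injective.ne hj), mul_zero]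
  · rw [hinner, norm_mul, norm_sum_stdAddChar_alltopPhase_sub (by omega) _ _ (ι.injective.ne hk)]
    have hN0 : (0 : ℝ) < N := by exact_mod_cast hp.pos
    field_simp
    simp [Real.sq_sqrt hN0.le]
end

section
/- Spark lower bound from coherence: for a dictionary Φ with unit-norm columns and coherence μ, any set of columns of size at most 1/μ is linearly independent; hence every nonzero vector in the kernel of Φ has more than 1/μ nonzero entries. -/
/-!
Let `G = Φᴴ Φ` be the Gram matrix: its diagonal is `1` and its off-diagonal entries have modulus
at most `μ`. If `Φ v = 0` then `G v = 0`; reading this equation in the row of an entry `v k` of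
maximal modulus gives `|v k| ≤ (s - 1) μ |v k|`, where `s` is the number of nonzero entries of `v`,
so `s > 1/μ`. A linear dependence among at most `1/μ` columns would be such a kernel vector.
-/

open Complex

open Finset Matrix

section

variable {m n R : Type*} [Fintype n]

theorem Matrix.mulVec_eq_linearCombination_cols [CommSemiring R] (A : Matrix m n R)
    (l : n →₀ R) : A *ᵥ ⇑l = Finsupp.linearCombination R (fun j i => A i j) l := by
  ext i
  rw [Finsupp.linearCombination_apply, Finsupp.sum_fintype _ _ (by simp)]
  simp [mulVec, dotProduct, mul_comm]

theorem Matrix.linearIndependent_cols_of_forall_mulVec_eq_zero [CommRing R] (A : Matrix m n R)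
    (S : Finset n) (h : ∀ v : n → R, A *ᵥ v = 0 → (∀ j ∉ S, v j = 0) → v = 0) :
    LinearIndependent R (fun j : S => fun i => A i j) := by
  show LinearIndepOn R (fun j i => A i j) (S : Set n)
  rw [linearIndepOn_iff]
  intro l hl hAl
  rw [← mulVec_eq_linearCombination_cols] at hAl
  exact DFunLike.coe_injective <|
    h l hAl fun j hj => Finsupp.notMem_support_iff.mp fun hjl => hj (hl hjl)

theorem Matrix.one_le_mul_card_support_sub_one [NormedRing R] [DecidableEq R]
    (A : Matrix n n R) (μ : ℝ) (hdiag : ∀ j, A j j = 1)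
    (hoff : ∀ j j', j ≠ j' → ‖A j j'‖ ≤ μ) {v : n → R} (hv : v ≠ 0) (hAv : A *ᵥ v = 0) :
    1 ≤ μ * ((#{j | v j ≠ 0} : ℝ) - 1) := by
  classical
  obtain ⟨j₀, hj₀⟩ := Function.ne_iff.mp hv
  have : Nonempty n := ⟨j₀⟩
  obtain ⟨k, hk⟩ := Finite.exists_max fun j => ‖v j‖
  have hvk : 0 < ‖v k‖ := (norm_pos_iff.mpr hj₀).trans_le (hk j₀)
  set S : Finset n := {j | v j ≠ 0}
  have hkS : k ∈ S := mem_filter.mpr ⟨mem_univ k, norm_pos_iff.mp hvk⟩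
  have hrow : v k + ∑ j ∈ S.erase k, A k j * v j = 0 := by
    have h := congrFun hAv k
    rwa [mulVec, dotProduct, ← sum_filter_of_ne (p := fun j => v j ≠ 0)
      fun j _ => right_ne_zero_of_mul, ← add_sum_erase _ _ hkS, hdiag, one_mul] at h
  have hbound : ‖v k‖ ≤ μ * ((#S : ℝ) - 1) * ‖v k‖ := calc
    ‖v k‖ = ‖∑ j ∈ S.erase k, A k j * v j‖ := by
      rw [eq_neg_of_add_eq_zero_left hrow, norm_neg]
    _ ≤ ∑ j ∈ S.erase k, ‖A k j‖ * ‖v j‖ := norm_sum_le_of_le _ fun j _ => norm_mul_le _ _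
    _ ≤ ∑ j ∈ S.erase k, μ * ‖v k‖ := by
      refine sum_le_sum fun j hj => ?_
      have hAkj := hoff k j (ne_of_mem_erase hj).symm
      exact mul_le_mul hAkj (hk j) (norm_nonneg _) ((norm_nonneg _).trans hAkj)
    _ = μ * ((#S : ℝ) - 1) * ‖v k‖ := by
      rw [sum_const, nsmul_eq_mul, cast_card_erase_of_mem hkS]; ring
  exact le_of_mul_le_mul_right (by rwa [one_mul]) hvk

end

theorem Matrix.conjTranspose_mul_self_apply_self {m n 𝕜 : Type*} [Fintype m] [RCLike 𝕜]
    (A : Matrix m n 𝕜) (j : n) : (Aᴴ * A) j j = ((∑ i, ‖A i j‖ ^ 2 : ℝ) : 𝕜) := by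
  simp [mul_apply, RCLike.conj_mul]

/-- Spark lower bound from coherence: any set of at most `1/μ` columns of a unit-norm
dictionary with coherence `μ` is linearly independent; hence any nonzero kernel vector
has more than `1/μ` nonzero entries. -/
theorem spark_lower_bound (N M : ℕ) (Φ : Matrix (Fin N) (Fin M) ℂ)
    (hcol : ∀ j : Fin M, ∑ i, ‖Φ i j‖ ^ 2 = 1)
    (μ : ℝ) (hμpos : 0 < μ)
    (hμ : ∀ j j' : Fin M, j ≠ j' →
      ‖∑ i, (starRingEnd ℂ) (Φ i j) * Φ i j'‖ ≤ μ) :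
    (∀ S : Finset (Fin M), (S.card : ℝ) ≤ 1 / μ →
        LinearIndependent ℂ (fun j : S => fun i => Φ i j)) ∧
      ∀ v : Fin M → ℂ, v ≠ 0 → Φ.mulVec v = 0 →
        1 / μ < ((Finset.univ.filter fun j => v j ≠ 0).card : ℝ) := by
  have hdiag : ∀ j, (Φᴴ * Φ) j j = 1 := fun j => by
    rw [conjTranspose_mul_self_apply_self, hcol, RCLike.ofReal_one]
  have hoff : ∀ j j', j ≠ j' → ‖(Φᴴ * Φ) j j'‖ ≤ μ := by
    simpa [mul_apply] using hμ
  have hkernel : ∀ v : Fin M → ℂ, v ≠ 0 → Φ *ᵥ v = 0 → 1 / μ < (#{j | v j ≠ 0} : ℝ) := by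
    intro v hv hΦv
    have h := (Φᴴ * Φ).one_le_mul_card_support_sub_one μ hdiag hoff hv
      (by rw [← mulVec_mulVec, hΦv, mulVec_zero])
    rw [div_lt_iff₀ hμpos]
    linarith
  refine ⟨fun S hS => Φ.linearIndependent_cols_of_forall_mulVec_eq_zero S
    fun v hΦv hvS => by_contra fun hv => ?_, hkernel⟩
  have hsupp : #{j | v j ≠ 0} ≤ #S :=
    card_le_card fun j hj => by_contra fun hjS => (mem_filter.mp hj).2 (hvS j hjS)
  have hlarge := hkernel v hv hΦv
  have hsupp' : (#{j | v j ≠ 0} : ℝ) ≤ #S := by exact_mod_cast hsupp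
  linarith
end
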